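/- arXiv:1202.3885 — 4 statements merged into one kernel-verified Lean document; each statement's English description precedes it below -/
import Mathlib

section
/- Let a > c > 0 be reals, k ≥ 1 an integer, and f a probability distribution on {1,…,k}. Set F = Σ_{j=1}^{k} j·f(j)/(j+1), q_s* = (1-F)·(a-c)/(2-F), and q_j* = (a-c)/((j+1)·(2-F)) for each j ∈ {1,…,k}. Then (i) q_s* maximizes over q ∈ ℝ the function q ↦ Σ_{j=1}^{k} f(j)·(a - q - j·q_j* - c)·q, and (ii) for every j ∈ {1,…,k}, q_j* maximizes over q ∈ ℝ the function q ↦ (a - q_s* - (j-1)·q_j* - q - c)·q. -/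
/-! Both profits are concave quadratics of the form `(2x - q) q`, maximized at `q = x`.
For the deviant this uses `∑ f = 1`: its expected profit is `(∑ f j (a - j qⱼ - c) - q) q`,
and the choice of `F` makes that intercept equal to `2 q_s`. For an outside coalition the
residual intercept `a - q_s - (j - 1) qⱼ - c` equals `2 qⱼ`. Since `F ≤ 1`, the denominator
`2 - F` never vanishes. -/

theorem sub_mul_le_sub_mul_of_eq_two_mul {R : Type*} [CommRing R] [LinearOrder R]
    [IsStrictOrderedRing R] {b x : R} (hb : b = 2 * x) (q : R) :
    (b - q) * q ≤ (b - x) * x := by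
  subst hb
  nlinarith [sq_nonneg (q - x)]

theorem Finset.sum_mul_sub_mul_of_sum_eq_one {ι R : Type*} [CommRing R] {s : Finset ι}
    {w : ι → R} (hw : ∑ i ∈ s, w i = 1) (A : ι → R) (q : R) :
    ∑ i ∈ s, w i * (A i - q) * q = (∑ i ∈ s, w i * A i - q) * q := by
  simp only [mul_sub, sub_mul, Finset.sum_sub_distrib, ← Finset.sum_mul, hw, one_mul]

theorem sum_natCast_mul_div_add_one_le_sum {s : Finset ℕ} {w : ℕ → ℝ}
    (hw : ∀ j ∈ s, 0 ≤ w j) :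
    ∑ j ∈ s, (j : ℝ) * w j / ((j : ℝ) + 1) ≤ ∑ j ∈ s, w j := by
  refine Finset.sum_le_sum fun j hj => ?_
  rw [div_le_iff₀ (by positivity)]
  nlinarith [hw j hj]

section Cournot

variable {a c F : ℝ} {k : ℕ} {f : ℕ → ℝ}

theorem deviant_intercept_eq (hf1 : ∑ j ∈ Finset.Icc 1 k, f j = 1)
    (hF : F = ∑ j ∈ Finset.Icc 1 k, (j : ℝ) * f j / ((j : ℝ) + 1)) (hD : 2 - F ≠ 0)
    {qj : ℕ → ℝ} (hqj : ∀ j ∈ Finset.Icc 1 k, qj j = (a - c) / (((j : ℝ) + 1) * (2 - F))) :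
    ∑ j ∈ Finset.Icc 1 k, f j * (a - (j : ℝ) * qj j - c) = 2 * ((1 - F) * (a - c) / (2 - F)) := by
  have hterm : ∀ j ∈ Finset.Icc 1 k, f j * (a - (j : ℝ) * qj j - c)
      = f j * (a - c) - (a - c) / (2 - F) * ((j : ℝ) * f j / ((j : ℝ) + 1)) := by
    intro j hj
    have : (j : ℝ) + 1 ≠ 0 := by positivity
    rw [hqj j hj]
    field_simp
    ring
  rw [Finset.sum_congr rfl hterm, Finset.sum_sub_distrib, ← Finset.sum_mul, hf1,
    ← Finset.mul_sum, ← hF]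
  field_simp
  ring

theorem outsider_intercept_eq (hD : 2 - F ≠ 0) (j : ℕ) :
    a - (1 - F) * (a - c) / (2 - F) - ((j : ℝ) - 1) * ((a - c) / (((j : ℝ) + 1) * (2 - F))) - c
      = 2 * ((a - c) / (((j : ℝ) + 1) * (2 - F))) := by
  have : (j : ℝ) + 1 ≠ 0 := by positivity
  field_simp
  ring

end Cournot

theorem stmt0_general (a c : ℝ) (k : ℕ)
    (f : ℕ → ℝ) (hf0 : ∀ j ∈ Finset.Icc 1 k, 0 ≤ f j)
    (hf1 : ∑ j ∈ Finset.Icc 1 k, f j = 1)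
    (F qs : ℝ) (qj : ℕ → ℝ)
    (hF : F = ∑ j ∈ Finset.Icc 1 k, (j : ℝ) * f j / ((j : ℝ) + 1))
    (hqs : qs = (1 - F) * (a - c) / (2 - F))
    (hqj : ∀ j ∈ Finset.Icc 1 k, qj j = (a - c) / (((j : ℝ) + 1) * (2 - F))) :
    (∀ q : ℝ,
      ∑ j ∈ Finset.Icc 1 k, f j * (a - q - (j : ℝ) * qj j - c) * q ≤
        ∑ j ∈ Finset.Icc 1 k, f j * (a - qs - (j : ℝ) * qj j - c) * qs) ∧
    (∀ j ∈ Finset.Icc 1 k, ∀ q : ℝ,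
      (a - qs - ((j : ℝ) - 1) * qj j - q - c) * q ≤
        (a - qs - ((j : ℝ) - 1) * qj j - qj j - c) * qj j) := by
  have hF1 : F ≤ 1 := hF ▸ hf1 ▸ sum_natCast_mul_div_add_one_le_sum hf0
  have hD : 2 - F ≠ 0 := by linarith
  have hprofit (q : ℝ) : ∑ j ∈ Finset.Icc 1 k, f j * (a - q - (j : ℝ) * qj j - c) * q
      = (∑ j ∈ Finset.Icc 1 k, f j * (a - (j : ℝ) * qj j - c) - q) * q := by
    rw [← Finset.sum_mul_sub_mul_of_sum_eq_one hf1]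
    exact Finset.sum_congr rfl fun j _ => by ring
  refine ⟨fun q => ?_, fun j hj q => ?_⟩
  · rw [hprofit, hprofit]
    exact sub_mul_le_sub_mul_of_eq_two_mul (hqs ▸ deviant_intercept_eq hf1 hF hD hqj) q
  · have hshape (x : ℝ) : a - qs - ((j : ℝ) - 1) * qj j - x - c
        = (a - qs - ((j : ℝ) - 1) * qj j - c) - x := by ring
    rw [hshape, hshape]
    refine sub_mul_le_sub_mul_of_eq_two_mul ?_ q
    rw [hqs, hqj j hj]
    exact outsider_intercept_eq hD j

/-- Cournot equilibrium quantities under a probability distribution over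
the number of outside coalitions.  `qs` maximizes the deviant coalition's expected
profit, and `qj j` maximizes each outside coalition's profit under the structure
with `j` coalitions. -/
theorem stmt0 (a c : ℝ) (hc : 0 < c) (hca : c < a) (k : ℕ) (hk : 1 ≤ k)
    (f : ℕ → ℝ) (hf0 : ∀ j ∈ Finset.Icc 1 k, 0 ≤ f j)
    (hf1 : ∑ j ∈ Finset.Icc 1 k, f j = 1)
    (F qs : ℝ) (qj : ℕ → ℝ)
    (hF : F = ∑ j ∈ Finset.Icc 1 k, (j : ℝ) * f j / ((j : ℝ) + 1))
    (hqs : qs = (1 - F) * (a - c) / (2 - F))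
    (hqj : ∀ j ∈ Finset.Icc 1 k, qj j = (a - c) / (((j : ℝ) + 1) * (2 - F))) :
    (∀ q : ℝ,
      ∑ j ∈ Finset.Icc 1 k, f j * (a - q - (j : ℝ) * qj j - c) * q ≤
        ∑ j ∈ Finset.Icc 1 k, f j * (a - qs - (j : ℝ) * qj j - c) * qs) ∧
    (∀ j ∈ Finset.Icc 1 k, ∀ q : ℝ,
      (a - qs - ((j : ℝ) - 1) * qj j - q - c) * q ≤
        (a - qs - ((j : ℝ) - 1) * qj j - qj j - c) * qj j) :=
  stmt0_general a c k f hf0 hf1 F qs qj hF hqs hqj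
end

section
/- Let a > c > 0 be reals, k ≥ 1 an integer, and f a probability distribution on {1,…,k}. Set F = Σ_{j=1}^{k} j·f(j)/(j+1), q_s* = (1-F)·(a-c)/(2-F), and q_j* = (a-c)/((j+1)·(2-F)) for each j ∈ {1,…,k}. Then Σ_{j=1}^{k} f(j)·(a - q_s* - j·q_j* - c)·q_s* = (a-c)²·((1-F)/(2-F)²)·Σ_{j=1}^{k} f(j)/(j+1). -/
/-- the expected Cournot profit of the deviant coalition at the
equilibrium quantities equals the value function
`(a-c)² · (1-F)/(2-F)² · Σ f(j)/(j+1)`. -/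
theorem stmt1 (a c : ℝ) (hc : 0 < c) (hca : c < a) (k : ℕ) (hk : 1 ≤ k)
    (f : ℕ → ℝ) (hf0 : ∀ j ∈ Finset.Icc 1 k, 0 ≤ f j)
    (hf1 : ∑ j ∈ Finset.Icc 1 k, f j = 1)
    (F qs : ℝ) (qj : ℕ → ℝ)
    (hF : F = ∑ j ∈ Finset.Icc 1 k, (j : ℝ) * f j / ((j : ℝ) + 1))
    (hqs : qs = (1 - F) * (a - c) / (2 - F))
    (hqj : ∀ j ∈ Finset.Icc 1 k, qj j = (a - c) / (((j : ℝ) + 1) * (2 - F))) :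
    ∑ j ∈ Finset.Icc 1 k, f j * (a - qs - (j : ℝ) * qj j - c) * qs =
      (a - c) ^ 2 * ((1 - F) / (2 - F) ^ 2) *
        ∑ j ∈ Finset.Icc 1 k, f j / ((j : ℝ) + 1) := by
  have hF1 : F ≤ 1 := by
    rw [hF]
    calc ∑ j ∈ Finset.Icc 1 k, (j : ℝ) * f j / ((j : ℝ) + 1) ≤ ∑ j ∈ Finset.Icc 1 k, f j := by
          apply Finset.sum_le_sum
          intro j hj
          have hj1 : (0:ℝ) < (j:ℝ) + 1 := by positivity
          rw [div_le_iff₀ hj1]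
          nlinarith [hf0 j hj]
      _ = 1 := hf1
  have h2F : (2:ℝ) - F ≠ 0 := by linarith
  rw [Finset.mul_sum]
  apply Finset.sum_congr rfl
  intro j hj
  rw [hqj j hj, hqs]
  have hj1 : ((j:ℝ) + 1) ≠ 0 := by positivity
  field_simp
  ring
end

section
/- For every integer n ≥ 2 and every s ∈ {1,…,n}, v^n(s) > v^n(s-1): the value function of the uniform-distribution cooperative oligopoly game is strictly increasing in coalition size. -/
/-!
Write `m = n - s` and let `r m` be the mean of `1 / (J + 1)` under the uniform partition
distribution on `m` elements. Then `F = 1 - r m` and `v^n(s) = (a - c)² (r / (1 + r))²`, so it is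
enough that `r` strictly decreases in `m`. The formula for `K` satisfies the recurrence
`S(m+1, j) = j S(m, j) + S(m, j-1)` of Stirling numbers, so passing from `m` to `m + 1` turns the
weight `1 / (j + 1)` into `j / (j + 1) + 1 / (j + 2) < 1` and the weight `1` into `j + 1`.
Cauchy–Schwarz, `(Σ S)² ≤ Σ S (j + 1) · Σ S / (j + 1)`, then gives `r (m + 1) < r m`.
At the ends, `v(0) = 0` and `v(n - 1) = (a - c)² / 9 < (a - c)² / 4 = v(n)`.
-/

/-- Stirling number of the second kind (as a real number):
`K m j = (1/j!) · Σ_{i=0}^{j} (-1)^i · C(j,i) · (j-i)^m`. -/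
noncomputable def K (m j : ℕ) : ℝ :=
  (1 / (Nat.factorial j : ℝ)) *
    ∑ i ∈ Finset.range (j + 1), (-1 : ℝ) ^ i * (Nat.choose j i : ℝ) * ((j - i : ℕ) : ℝ) ^ m

/-- Bell number `B m = Σ_{j=1}^{m} K m j`. -/
noncomputable def B (m : ℕ) : ℝ := ∑ j ∈ Finset.Icc 1 m, K m j

/-- Uniform partition distribution: `f n s j = K (n-s) j / B (n-s)`. -/
noncomputable def f (n s j : ℕ) : ℝ := K (n - s) j / B (n - s)

/-- `F n s = Σ_{j=1}^{n-s} j · f n s j / (j+1)`. -/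
noncomputable def F (n s : ℕ) : ℝ :=
  ∑ j ∈ Finset.Icc 1 (n - s), (j : ℝ) * f n s j / ((j : ℝ) + 1)

/-- Value of a coalition of size `s` in the `n`-firm uniform-distribution game:
`v^n(n) = (a-c)²/4`, `v^n(0) = 0`, and for `1 ≤ s ≤ n-1`,
`v^n(s) = (a-c)² · (1-F)/(2-F)² · Σ_{j=1}^{n-s} f n s j / (j+1)`. -/
noncomputable def v (a c : ℝ) (n s : ℕ) : ℝ :=
  if s = n then (a - c) ^ 2 / 4
  else if s = 0 then 0
  else (a - c) ^ 2 * ((1 - F n s) / (2 - F n s) ^ 2) *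
    ∑ j ∈ Finset.Icc 1 (n - s), f n s j / ((j : ℝ) + 1)

open Finset Nat

noncomputable def stirlingSummand (m j i : ℕ) : ℝ :=
  (-1 : ℝ) ^ i * (j.choose i : ℝ) * ((j - i : ℕ) : ℝ) ^ m

lemma factorial_mul_K (m j : ℕ) :
    (j ! : ℝ) * K m j = ∑ i ∈ range (j + 1), stirlingSummand m j i := by
  rw [K, ← mul_assoc, mul_one_div_cancel (by positivity), one_mul]
  rfl

lemma stirlingSummand_succ_left (m : ℕ) {j i : ℕ} (hi : i ≤ j) :
    stirlingSummand (m + 1) j i = ((j : ℝ) - i) * stirlingSummand m j i := by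
  rw [stirlingSummand, stirlingSummand, pow_succ, Nat.cast_sub hi]
  ring

lemma succ_mul_stirlingSummand_succ_succ (m j i : ℕ) :
    ((i : ℝ) + 1) * stirlingSummand m (j + 1) (i + 1) =
      -(((j : ℝ) + 1) * stirlingSummand m j i) := by
  have hchoose := congrArg (Nat.cast : ℕ → ℝ) (Nat.add_one_mul_choose_eq j i)
  push_cast at hchoose
  rw [stirlingSummand, stirlingSummand, Nat.add_sub_add_right]
  linear_combination ((-1 : ℝ) ^ i * ((j - i : ℕ) : ℝ) ^ m) * hchoose

lemma K_zero_succ (j : ℕ) : K 0 (j + 1) = 0 := by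
  have h := congrArg (Int.cast : ℤ → ℝ)
    (Int.alternating_sum_range_choose_of_ne j.succ_ne_zero)
  push_cast at h
  simp [K, h]

lemma K_succ_zero (m : ℕ) : K (m + 1) 0 = 0 := by
  simp [K]

lemma K_succ_succ (m j : ℕ) : K (m + 1) (j + 1) = (j + 1) * K m (j + 1) + K m j := by
  have hweighted : ∑ i ∈ range (j + 2), (i : ℝ) * stirlingSummand m (j + 1) i
      = -(((j : ℝ) + 1) * ∑ i ∈ range (j + 1), stirlingSummand m j i) := by
    simp only [sum_range_succ' _ (j + 1), Nat.cast_add, Nat.cast_one, CharP.cast_eq_zero, zero_mul,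
      add_zero, succ_mul_stirlingSummand_succ_succ, sum_neg_distrib, mul_sum]
  have hsum : ((j + 1)! : ℝ) * K (m + 1) (j + 1)
      = (j + 1) * (((j + 1)! : ℝ) * K m (j + 1)) + (j + 1) * ((j ! : ℝ) * K m j) := by
    rw [factorial_mul_K, factorial_mul_K, factorial_mul_K,
      sum_congr rfl fun i hi => stirlingSummand_succ_left m (mem_range_succ_iff.mp hi)]
    simp only [sub_mul, sum_sub_distrib, ← mul_sum, hweighted]
    push_cast
    ring
  rw [Nat.factorial_succ, Nat.cast_mul] at hsum
  have hfac : ((j + 1 : ℕ) : ℝ) * j ! ≠ 0 := by positivity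
  push_cast at hsum hfac
  exact mul_left_cancel₀ hfac (by linear_combination hsum)

lemma K_eq_stirlingSecond (m j : ℕ) : K m j = stirlingSecond m j := by
  induction m generalizing j with
  | zero => cases j with
    | zero => simp [K]
    | succ j => simp [K_zero_succ]
  | succ m ih => cases j with
    | zero => simp [K_succ_zero]
    | succ j => rw [K_succ_succ, ih, ih, stirlingSecond_succ_succ]; push_cast; ring

noncomputable def stirlingMoment (m : ℕ) (g : ℕ → ℝ) : ℝ :=
  ∑ j ∈ range (m + 1), (stirlingSecond m j : ℝ) * g j

lemma stirlingMoment_succ (m : ℕ) (g : ℕ → ℝ) :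
    stirlingMoment (m + 1) g = stirlingMoment m (fun j => j * g j + g (j + 1)) := by
  have hshift : ∑ j ∈ range (m + 1), ((j : ℝ) + 1) * stirlingSecond m (j + 1) * g (j + 1)
      = ∑ j ∈ range (m + 1), (stirlingSecond m j : ℝ) * (j * g j) := by
    rw [sum_range_succ, stirlingSecond_eq_zero_of_lt m.lt_succ_self, sum_range_succ' _ m]
    simp only [Nat.cast_zero, mul_zero, zero_mul, add_zero, Nat.cast_add, Nat.cast_one]
    exact sum_congr rfl fun j _ => by ring
  rw [stirlingMoment, stirlingMoment, sum_range_succ' _ (m + 1), stirlingSecond_succ_zero,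
    Nat.cast_zero, zero_mul, add_zero]
  simp only [mul_add, sum_add_distrib, ← hshift]
  rw [← sum_add_distrib]
  refine sum_congr rfl fun j _ => ?_
  rw [stirlingSecond_succ_succ]
  push_cast
  ring

lemma stirlingMoment_lt_stirlingMoment (m : ℕ) {g g' : ℕ → ℝ} (h : ∀ j, g j < g' j) :
    stirlingMoment m g < stirlingMoment m g' :=
  sum_lt_sum (fun j _ => mul_le_mul_of_nonneg_left (h j).le (Nat.cast_nonneg _))
    ⟨m, self_mem_range_succ m, by
      rw [stirlingSecond_self, Nat.cast_one, one_mul, one_mul]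
      exact h m⟩

lemma stirlingMoment_pos (m : ℕ) {g : ℕ → ℝ} (hg : ∀ j, 0 < g j) :
    0 < stirlingMoment m g := by
  simpa [stirlingMoment] using stirlingMoment_lt_stirlingMoment m (g := 0) hg

lemma stirlingMoment_one_pos (m : ℕ) : 0 < stirlingMoment m 1 :=
  stirlingMoment_pos m fun _ => one_pos

lemma sq_stirlingMoment_one_le_mul_inv (m : ℕ) {g : ℕ → ℝ} (hg : ∀ j, 0 < g j) :
    stirlingMoment m 1 ^ 2 ≤ stirlingMoment m g * stirlingMoment m (fun j => (g j)⁻¹) := by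
  refine sum_sq_le_sum_mul_sum_of_sq_le_mul _ (fun j _ => by have := hg j; positivity)
    (fun j _ => by have := hg j; positivity) fun j _ => le_of_eq ?_
  field_simp [(hg j).ne']
  simp

noncomputable def meanInvSucc (m : ℕ) : ℝ :=
  stirlingMoment m (fun j => ((j : ℝ) + 1)⁻¹) / stirlingMoment m 1

lemma meanInvSucc_pos (m : ℕ) : 0 < meanInvSucc m :=
  div_pos (stirlingMoment_pos m fun j => by positivity) (stirlingMoment_one_pos m)

lemma meanInvSucc_one : meanInvSucc 1 = 1 / 2 := by
  norm_num [meanInvSucc, stirlingMoment, sum_range_succ, stirlingSecond_self]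

lemma meanInvSucc_succ_lt (m : ℕ) : meanInvSucc (m + 1) < meanInvSucc m := by
  have hdrop : stirlingMoment (m + 1) (fun j => ((j : ℝ) + 1)⁻¹) < stirlingMoment m 1 := by
    rw [stirlingMoment_succ]
    refine stirlingMoment_lt_stirlingMoment m fun j => ?_
    push_cast
    rw [Pi.one_apply, ← sub_pos]
    field_simp
    ring_nf
    positivity
  have hcs : stirlingMoment m 1 ^ 2 ≤ stirlingMoment m (fun j => (j : ℝ) + 1) *
      stirlingMoment m (fun j => ((j : ℝ) + 1)⁻¹) :=
    sq_stirlingMoment_one_le_mul_inv m fun j => by positivity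
  have hsucc : stirlingMoment (m + 1) 1 = stirlingMoment m (fun j => (j : ℝ) + 1) := by
    simp [stirlingMoment_succ]
  rw [meanInvSucc, meanInvSucc, div_lt_div_iff₀ (stirlingMoment_one_pos _)
    (stirlingMoment_one_pos _), hsucc]
  calc _ < stirlingMoment m 1 ^ 2 := by
        rw [sq]; exact mul_lt_mul_of_pos_right hdrop (stirlingMoment_one_pos m)
    _ ≤ _ := hcs.trans_eq (mul_comm _ _)

lemma sum_Icc_K_mul {m : ℕ} (hm : m ≠ 0) (g : ℕ → ℝ) :
    ∑ j ∈ Icc 1 m, K m j * g j = stirlingMoment m g := by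
  obtain ⟨m, rfl⟩ := Nat.exists_eq_succ_of_ne_zero hm
  rw [stirlingMoment, range_succ_eq_Icc_zero, ← insert_Icc_add_one_left_eq_Icc (Nat.zero_le _),
    sum_insert (by simp), stirlingSecond_succ_zero, Nat.cast_zero, zero_mul, zero_add]
  simp only [K_eq_stirlingSecond, zero_add]

lemma B_eq_stirlingMoment {m : ℕ} (hm : m ≠ 0) : B m = stirlingMoment m 1 := by
  simp only [B, ← sum_Icc_K_mul hm, Pi.one_apply, mul_one]

lemma sum_f_div_succ {n s : ℕ} (hs : s < n) :
    ∑ j ∈ Icc 1 (n - s), f n s j / ((j : ℝ) + 1) = meanInvSucc (n - s) := by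
  have hm : n - s ≠ 0 := by omega
  simp only [meanInvSucc, f, ← B_eq_stirlingMoment hm, ← sum_Icc_K_mul hm, sum_div]
  exact sum_congr rfl fun j _ => by ring

lemma sum_f {n s : ℕ} (hs : s < n) : ∑ j ∈ Icc 1 (n - s), f n s j = 1 := by
  have hm : n - s ≠ 0 := by omega
  simp only [f]
  rw [← sum_div, ← B, B_eq_stirlingMoment hm, div_self (stirlingMoment_one_pos _).ne']

lemma F_eq {n s : ℕ} (hs : s < n) : F n s = 1 - meanInvSucc (n - s) := by
  rw [← sum_f hs, ← sum_f_div_succ hs, ← sum_sub_distrib, F]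
  refine sum_congr rfl fun j _ => ?_
  field_simp
  ring

lemma v_eq (a c : ℝ) {n s : ℕ} (hs0 : s ≠ 0) (hs : s < n) :
    v a c n s = (a - c) ^ 2 * (meanInvSucc (n - s) / (1 + meanInvSucc (n - s))) ^ 2 := by
  rw [v, if_neg hs.ne, if_neg hs0, F_eq hs, sum_f_div_succ hs, sub_sub_cancel,
    show (2 : ℝ) - (1 - meanInvSucc (n - s)) = 1 + meanInvSucc (n - s) by ring]
  have hr : 0 < 1 + meanInvSucc (n - s) := by linarith [meanInvSucc_pos (n - s)]
  field_simp

lemma v_self (a c : ℝ) (n : ℕ) : v a c n n = (a - c) ^ 2 / 4 := if_pos rfl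

lemma v_zero (a c : ℝ) {n : ℕ} (hn : n ≠ 0) : v a c n 0 = 0 := by
  simp [v, hn.symm]

lemma v_pos {a c : ℝ} (hac : a ≠ c) {n s : ℕ} (hs0 : s ≠ 0) (hsn : s ≤ n) :
    0 < v a c n s := by
  have := sub_ne_zero.mpr hac
  obtain rfl | hsn := hsn.eq_or_lt
  · rw [v_self]
    positivity
  · have := meanInvSucc_pos (n - s)
    rw [v_eq a c hs0 hsn]
    positivity

lemma div_one_add_lt_div_one_add {x y : ℝ} (hx : 0 ≤ x) (hxy : x < y) :
    x / (1 + x) < y / (1 + y) := by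
  rw [div_lt_div_iff₀ (by linarith) (by linarith)]
  linarith

theorem stmt3_general (a c : ℝ) (hca : c < a) (n : ℕ) :
    ∀ s ∈ Finset.Icc 1 n, v a c n (s - 1) < v a c n s := by
  intro s hs
  obtain ⟨hs1, hsn⟩ := Finset.mem_Icc.mp hs
  obtain rfl | hs1 := hs1.eq_or_lt
  · rw [Nat.sub_self, v_zero a c (by omega)]
    exact v_pos hca.ne' one_ne_zero hsn
  have hac : 0 < (a - c) ^ 2 := pow_pos (sub_pos.mpr hca) 2
  obtain rfl | hsn := hsn.eq_or_lt
  · rw [v_self, v_eq a c (by omega) (by omega), Nat.sub_sub_self hs1.le, meanInvSucc_one]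
    linarith
  · rw [v_eq a c (by omega) (by omega), v_eq a c (by omega) hsn,
      show n - (s - 1) = n - s + 1 by omega]
    have hr := meanInvSucc_pos (n - s + 1)
    have hlt := div_one_add_lt_div_one_add hr.le (meanInvSucc_succ_lt (n - s))
    gcongr

/-- for every `n ≥ 2` and `s ∈ {1,…,n}`, `v^n(s) > v^n(s-1)`:
the value function is strictly increasing in coalition size. -/
theorem stmt3 (a c : ℝ) (hc : 0 < c) (hca : c < a) (n : ℕ) (hn : 2 ≤ n) :
    ∀ s ∈ Finset.Icc 1 n, v a c n (s - 1) < v a c n s :=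
  stmt3_general a c hca n
end

section
/- Let a > c > 0 be reals. For each pair of integers n > s ≥ 1 let z_{n,s} be a probability distribution on {1,…,n-s} that first-order dominates the uniform partition distribution f_{n,s}, i.e., Σ_{j=1}^{m} z_{n,s}(j) ≤ Σ_{j=1}^{m} f_{n,s}(j) for all m ∈ {1,…,n-s}. Define v_z^n(s) = (a-c)²·h²/(1+h)² with h = Σ_{j=1}^{n-s} z_{n,s}(j)/(1+j) for 1 ≤ s ≤ n-1, and v_z^n(n) = (a-c)²/4. Then (i) for every n, every core allocation of (Fin n, v^n) is a core allocation of (Fin n, v_z^n); and (ii) there exists an integer N₀ such that for every n ≥ N₀ the core of (Fin n, v_z^n) is nonempty. -/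
/-! Both games have the form `(a-c)² g(h)` with `g(h) = h²/(1+h)²` increasing on `h ≥ 0`, where
`h = ∑ p j/(1+j)` for `p = f n s`, resp. `z n s`. Since `1/(1+j)` decreases, first-order dominance
gives `h_z ≤ h_f` by Abel summation, so `v_z ≤ v` on proper coalitions; this is (i).

For (ii) the equal split `(a-c)²/(4n)` is in the core once `n` is large. A coalition with
`9s ≥ 4n` is worth at most `g(1/2)(a-c)² = (a-c)²/9`. A smaller one leaves `m = n - s > 5n/9`
outsiders, and `h_f ≤ 1/(3(√m+1))`: splitting at `t = 4(√m+1)`, partitions with at most `t`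
blocks have probability at most `t^m/B(m) ≤ 2(2t)!/2^m`, because `B(m) ≥ K(m,2t) ≥ (2t)^m/(2(2t)!)`,
while the others contribute at most `1/(t+2)`. -/

open Finset Nat

/-- `j! * K m j`, the number of surjections from an `m`-set onto a `j`-set. -/
noncomputable def powFwdDiff (m j : ℕ) : ℝ := (fwdDiff 1)^[j] (fun r : ℝ ↦ r ^ m) 0

lemma K_eq_powFwdDiff_div (m j : ℕ) : K m j = powFwdDiff m j / j ! := by
  rw [K, powFwdDiff, fwdDiff_iter_eq_sum_shift, one_div, inv_mul_eq_div,
    ← sum_range_reflect]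
  refine congrArg (· / _) (sum_congr rfl fun i hi ↦ ?_)
  have hij : i ≤ j := Nat.lt_succ_iff.mp (mem_range.mp hi)
  rw [Nat.add_sub_cancel, Nat.sub_sub_self hij, Nat.choose_symm hij]
  simp

lemma fwdDiff_pow (m : ℕ) :
    fwdDiff 1 (fun r : ℝ ↦ r ^ m) = ∑ i ∈ range m, m.choose i • fun r : ℝ ↦ r ^ i := by
  ext x
  simp [nsmul_eq_mul, fwdDiff, add_pow, sum_range_succ, mul_comm]

lemma powFwdDiff_succ (m j : ℕ) :
    powFwdDiff m (j + 1) = ∑ i ∈ range m, m.choose i * powFwdDiff i j := by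
  rw [powFwdDiff, Function.iterate_succ_apply, fwdDiff_pow, fwdDiff_iter_finsetSum,
    Finset.sum_apply]
  refine sum_congr rfl fun i _ ↦ ?_
  rw [fwdDiff_iter_const_smul, Pi.smul_apply, nsmul_eq_mul, powFwdDiff]

lemma powFwdDiff_nonneg (m j : ℕ) : 0 ≤ powFwdDiff m j := by
  induction j generalizing m with
  | zero => rw [powFwdDiff, Function.iterate_zero, id]; positivity
  | succ j ih =>
    rw [powFwdDiff_succ]
    exact sum_nonneg fun i _ ↦ mul_nonneg (Nat.cast_nonneg _) (ih i)

lemma sum_choose_mul_powFwdDiff (m j : ℕ) :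
    ∑ k ∈ range (j + 1), (j.choose k : ℝ) * powFwdDiff m k = (j : ℝ) ^ m := by
  have := shift_eq_sum_fwdDiff_iter (1 : ℝ) (fun r : ℝ ↦ r ^ m) j 0
  simpa [powFwdDiff, nsmul_eq_mul] using this.symm

lemma K_nonneg (m j : ℕ) : 0 ≤ K m j := by
  rw [K_eq_powFwdDiff_div]; exact div_nonneg (powFwdDiff_nonneg m j) (Nat.cast_nonneg _)

lemma sum_Icc_K_le_pow (m t : ℕ) : ∑ j ∈ Icc 1 t, K m j ≤ (t : ℝ) ^ m := by
  rw [← sum_choose_mul_powFwdDiff]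
  calc ∑ j ∈ Icc 1 t, K m j ≤ ∑ j ∈ Icc 1 t, (t.choose j : ℝ) * powFwdDiff m j := by
        refine sum_le_sum fun j hj ↦ ?_
        have hjt : j ≤ t := (mem_Icc.mp hj).2
        have hchoose : (1 : ℝ) ≤ t.choose j := by exact_mod_cast Nat.choose_pos hjt
        have hfact : (1 : ℝ) ≤ j ! := by exact_mod_cast j.factorial_pos
        rw [K_eq_powFwdDiff_div]
        have := powFwdDiff_nonneg m j
        calc powFwdDiff m j / j ! ≤ powFwdDiff m j := div_le_self this hfact
          _ ≤ _ := le_mul_of_one_le_left this hchoose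
    _ ≤ ∑ j ∈ range (t + 1), (t.choose j : ℝ) * powFwdDiff m j := by
        refine sum_le_sum_of_subset_of_nonneg (fun j hj ↦ ?_) fun j _ _ ↦ ?_
        · simp only [mem_Icc, mem_range] at hj ⊢; omega
        · exact mul_nonneg (Nat.cast_nonneg _) (powFwdDiff_nonneg m j)

lemma pow_sub_mul_pow_div_factorial_le_K (m u : ℕ) :
    (((u + 1 : ℕ) : ℝ) ^ m - (u + 1) * (u : ℝ) ^ m) / (u + 1)! ≤ K m (u + 1) := by
  rw [K_eq_powFwdDiff_div]
  gcongr
  have htop := sum_choose_mul_powFwdDiff m (u + 1)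
  rw [sum_range_succ, Nat.choose_self, Nat.cast_one, one_mul] at htop
  have hlower : ∑ k ∈ range (u + 1), ((u + 1).choose k : ℝ) * powFwdDiff m k
      ≤ (u + 1) * (u : ℝ) ^ m := by
    rw [← sum_choose_mul_powFwdDiff, mul_sum]
    refine sum_le_sum fun k hk ↦ ?_
    have hku : k ≤ u := Nat.lt_succ_iff.mp (mem_range.mp hk)
    have hchoose : ((u + 1).choose k : ℝ) ≤ (u + 1) * u.choose k := by
      have := Nat.choose_mul_succ_eq u k
      have : (u + 1).choose k ≤ u.choose k * (u + 1) := by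
        rw [this]; exact Nat.le_mul_of_pos_right _ (by omega)
      exact_mod_cast this.trans_eq (mul_comm _ _)
    rw [← mul_assoc]
    exact mul_le_mul_of_nonneg_right hchoose (powFwdDiff_nonneg m k)
  linarith

lemma K_one (m : ℕ) (hm : 1 ≤ m) : K m 1 = 1 := by
  simp [K, sum_range_succ, zero_pow (by omega : m ≠ 0)]

lemma B_pos (m : ℕ) (hm : 1 ≤ m) : 0 < B m := by
  have h := single_le_sum (fun j _ ↦ K_nonneg m j) (mem_Icc.mpr ⟨le_rfl, hm⟩)
  rw [K_one m hm] at h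
  exact one_pos.trans_le h

lemma sum_K_div_B (m : ℕ) (hm : 1 ≤ m) : ∑ j ∈ Icc 1 m, K m j / B m = 1 := by
  rw [← sum_div, ← B, div_self (B_pos m hm).ne']

noncomputable def harm (p : ℕ → ℝ) (m : ℕ) : ℝ := ∑ j ∈ Icc 1 m, p j / (1 + j)

section harm

variable {p q : ℕ → ℝ} {m : ℕ}

lemma harm_nonneg (hp : ∀ j ∈ Icc 1 m, 0 ≤ p j) : 0 ≤ harm p m :=
  sum_nonneg fun j hj ↦ div_nonneg (hp j hj) (by positivity)

lemma harm_le_half_sum (hp : ∀ j ∈ Icc 1 m, 0 ≤ p j) :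
    harm p m ≤ (∑ j ∈ Icc 1 m, p j) / 2 := by
  rw [harm, sum_div]
  refine sum_le_sum fun j hj ↦ div_le_div_of_nonneg_left (hp j hj) two_pos ?_
  have : (1 : ℝ) ≤ j := by exact_mod_cast (mem_Icc.mp hj).1
  linarith

lemma harm_le_sum_Icc_add (hp : ∀ j, 0 ≤ p j) (t : ℕ) :
    harm p m ≤ ∑ j ∈ Icc 1 t, p j + (∑ j ∈ Icc 1 m, p j) / (t + 2) := by
  have hterm : ∀ j ∈ Icc 1 m,
      p j / (1 + j) ≤ (if j ≤ t then p j else 0) + p j / (t + 2) := by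
    intro j _
    split_ifs with hjt
    · have : p j / (1 + j) ≤ p j := div_le_self (hp j) (by simp)
      linarith [div_nonneg (hp j) (by positivity : (0 : ℝ) ≤ t + 2)]
    · refine (div_le_div_of_nonneg_left (hp j) (by positivity) ?_).trans_eq (zero_add _).symm
      have : (t : ℝ) + 1 ≤ j := by exact_mod_cast Nat.lt_of_not_le hjt
      linarith
  calc harm p m ≤ ∑ j ∈ Icc 1 m, ((if j ≤ t then p j else 0) + p j / (t + 2)) :=
        sum_le_sum hterm
    _ = ∑ j ∈ (Icc 1 m).filter (· ≤ t), p j + (∑ j ∈ Icc 1 m, p j) / (t + 2) := by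
        rw [sum_add_distrib, sum_filter, sum_div]
    _ ≤ _ := by
        gcongr ?_ + _
        refine sum_le_sum_of_subset_of_nonneg (fun j hj ↦ ?_) fun j _ _ ↦ hp j
        simp only [mem_filter, mem_Icc] at hj ⊢
        omega

lemma mul_sum_le_sum_mul_of_antitone (d w : ℕ → ℝ) (hw : Antitone w) (m : ℕ)
    (hd : ∀ M ∈ Icc 1 m, 0 ≤ ∑ j ∈ Icc 1 M, d j) :
    w m * ∑ j ∈ Icc 1 m, d j ≤ ∑ j ∈ Icc 1 m, d j * w j := by
  induction m with
  | zero => simp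
  | succ m ih =>
    have hdm : 0 ≤ ∑ j ∈ Icc 1 m, d j := by
      rcases Nat.eq_zero_or_pos m with rfl | hm
      · simp
      · exact hd m (mem_Icc.mpr ⟨hm, by omega⟩)
    have ih' := ih fun M hM ↦ hd M (mem_Icc.mpr ⟨(mem_Icc.mp hM).1, by grind⟩)
    rw [sum_Icc_succ_top (by omega), sum_Icc_succ_top (by omega)]
    nlinarith [hw (Nat.le_succ m)]

lemma harm_le_harm_of_sum_le
    (hpq : ∀ M ∈ Icc 1 m, ∑ j ∈ Icc 1 M, q j ≤ ∑ j ∈ Icc 1 M, p j) :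
    harm q m ≤ harm p m := by
  have hw : Antitone fun j : ℕ ↦ (1 + j : ℝ)⁻¹ := fun i j hij ↦ by
    dsimp only
    gcongr
  have h := mul_sum_le_sum_mul_of_antitone (fun j ↦ p j - q j) _ hw m fun M hM ↦ by
    simpa [sum_sub_distrib] using hpq M hM
  have htotal : 0 ≤ (1 + m : ℝ)⁻¹ * ∑ j ∈ Icc 1 m, (p j - q j) := by
    refine mul_nonneg (by positivity) ?_
    rcases Nat.eq_zero_or_pos m with rfl | hm
    · simp
    · simpa [sum_sub_distrib] using hpq m (mem_Icc.mpr ⟨hm, le_rfl⟩)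
  simp only [sub_mul, sum_sub_distrib] at h htotal
  simp only [harm, div_eq_mul_inv]
  linarith

end harm

lemma choose_two_mul_pow_le_add_one_pow (x m : ℕ) (hm : 2 ≤ m) :
    m.choose 2 * x ^ (m - 2) ≤ (x + 1) ^ m := by
  rw [add_pow]
  refine le_of_eq_of_le ?_ (single_le_sum (fun _ _ ↦ Nat.zero_le _)
    (mem_range.mpr (show m - 2 < m + 1 by omega)))
  rw [Nat.choose_symm hm, one_pow, mul_one, mul_comm, Nat.cast_id]

lemma two_mul_mul_pow_le_add_one_pow (x m : ℕ) (hm : 2 ≤ m)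
    (h : 4 * (x + 1) * x ^ 2 ≤ m * (m - 1)) : 2 * (x + 1) * x ^ m ≤ (x + 1) ^ m := by
  have hchoose : m * (m - 1) = 2 * m.choose 2 := by
    rw [Nat.choose_two_right, Nat.mul_div_cancel' (Nat.even_mul_pred_self m).two_dvd]
  have hx : x ^ m = x ^ 2 * x ^ (m - 2) := by rw [← pow_add]; congr 1; omega
  have := choose_two_mul_pow_le_add_one_pow x m hm
  have : 2 * (2 * (x + 1) * x ^ m) ≤ 2 * (x + 1) ^ m :=
    calc 2 * (2 * (x + 1) * x ^ m) = 4 * (x + 1) * x ^ 2 * x ^ (m - 2) := by rw [hx]; ring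
      _ ≤ 2 * m.choose 2 * x ^ (m - 2) := by rw [← hchoose]; gcongr
      _ ≤ 2 * (x + 1) ^ m := by rw [mul_assoc]; gcongr
  omega

lemma factorial_mul_pow_three_le_two_pow (k m : ℕ) (hk : 135 ≤ k) (hkm : k * k ≤ m) :
    (8 * k + 8)! * (8 * k + 8) ^ 3 ≤ 2 ^ m := by
  set q := k / 9
  have hq : 15 ≤ q := by omega
  have hbase : 8 * k + 8 ≤ 2 ^ q := by
    have h1 : q - 7 < 2 ^ (q - 7) := Nat.lt_two_pow_self
    have h2 : 2 ^ q = 2 ^ 7 * 2 ^ (q - 7) := by rw [← pow_add]; congr 1; omega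
    omega
  calc (8 * k + 8)! * (8 * k + 8) ^ 3 ≤ (8 * k + 8) ^ (8 * k + 8) * (8 * k + 8) ^ 3 := by
        gcongr; exact Nat.factorial_le_pow _
    _ = (8 * k + 8) ^ (8 * k + 11) := by rw [← pow_add]
    _ ≤ (2 ^ q) ^ (8 * k + 11) := by gcongr
    _ = 2 ^ (q * (8 * k + 11)) := by rw [← pow_mul]
    _ ≤ 2 ^ m := by
        gcongr
        · norm_num
        · calc q * (8 * k + 11) ≤ q * (9 * k) := by gcongr; omega
            _ = 9 * q * k := by ring
            _ ≤ k * k := by gcongr; omega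
            _ ≤ m := hkm

lemma pow_div_two_mul_factorial_le_B (m u : ℕ) (hum : u + 1 ≤ m)
    (hpow : 2 * (u + 1) * u ^ m ≤ (u + 1) ^ m) :
    ((u + 1 : ℕ) : ℝ) ^ m / (2 * (u + 1)!) ≤ B m := by
  have hpow' : 2 * ((u : ℝ) + 1) * (u : ℝ) ^ m ≤ ((u : ℝ) + 1) ^ m := by exact_mod_cast hpow
  calc ((u + 1 : ℕ) : ℝ) ^ m / (2 * (u + 1)!) = ((u + 1 : ℕ) : ℝ) ^ m / 2 / (u + 1)! := by
        rw [div_div]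
    _ ≤ (((u + 1 : ℕ) : ℝ) ^ m - (u + 1) * (u : ℝ) ^ m) / (u + 1)! := by
        gcongr; push_cast; linarith
    _ ≤ K m (u + 1) := pow_sub_mul_pow_div_factorial_le_K m u
    _ ≤ B m := single_le_sum (fun j _ ↦ K_nonneg m j) (mem_Icc.mpr ⟨by omega, hum⟩)

lemma harm_uniform_le (m k : ℕ) (hk : 4096 ≤ k) (hkm : k * k ≤ m) :
    harm (fun j ↦ K m j / B m) m ≤ 1 / (3 * (k + 1)) := by
  set t := 4 * (k + 1) with ht
  set u := 8 * k + 7 with hu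
  have hB : 0 < B m := B_pos m (by nlinarith)
  have hsplit := harm_le_sum_Icc_add (m := m) (fun j ↦ div_nonneg (K_nonneg m j) hB.le) t
  rw [sum_K_div_B m (by nlinarith), ← sum_div] at hsplit
  have hBlow := pow_div_two_mul_factorial_le_B m u (by nlinarith) <|
    two_mul_mul_pow_le_add_one_pow u m (by nlinarith) <|
    calc 4 * (u + 1) * u ^ 2 ≤ 4 * (9 * k) * (9 * k) ^ 2 := by gcongr <;> omega
      _ = k * k * (2916 * k) := by ring
      _ ≤ m * (m - 1) := by
        have : 2917 * k ≤ k * k := Nat.mul_le_mul_right k (by omega)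
        gcongr; omega
  have hfact : (2 * (u + 1)! : ℝ) * (3 * (k + 1) * (t + 2)) ≤ 2 ^ m := by
    have : 2 * (3 * (k + 1) * (t + 2)) ≤ (8 * k + 8) ^ 3 := by rw [ht]; nlinarith
    have : 2 * (u + 1)! * (3 * (k + 1) * (t + 2)) ≤ 2 ^ m :=
      calc _ = (8 * k + 8)! * (2 * (3 * (k + 1) * (t + 2))) := by rw [hu]; ring
        _ ≤ _ := by gcongr
        _ ≤ 2 ^ m := factorial_mul_pow_three_le_two_pow k m (by omega) hkm
    exact_mod_cast this
  have hhead : (∑ j ∈ Icc 1 t, K m j) / B m ≤ 1 / (3 * (k + 1) * (t + 2)) :=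
    calc (∑ j ∈ Icc 1 t, K m j) / B m
        ≤ (t : ℝ) ^ m / (((u + 1 : ℕ) : ℝ) ^ m / (2 * (u + 1)!)) := by
          gcongr
          exact sum_Icc_K_le_pow m t
      _ = 2 * (u + 1)! / 2 ^ m := by
          have hut : ((u + 1 : ℕ) : ℝ) = 2 * t := by push_cast [hu, ht]; ring
          have ht0 : (t : ℝ) ≠ 0 := by positivity
          rw [hut, mul_pow]
          field_simp
      _ ≤ 1 / (3 * (k + 1) * (t + 2)) := by
          rw [div_le_div_iff₀ (by positivity) (by positivity)]
          linarith
  calc harm (fun j ↦ K m j / B m) m ≤ 1 / (3 * (k + 1) * (t + 2)) + 1 / (t + 2) := by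
        linarith
    _ = (1 + 3 * (k + 1)) / (3 * (k + 1) * (t + 2)) := by field_simp
    _ ≤ (t + 2) / (3 * (k + 1) * (t + 2)) := by
        refine div_le_div_of_nonneg_right ?_ (by positivity)
        push_cast [ht]; linarith
    _ = 1 / (3 * (k + 1)) := by field_simp

lemma harm_uniform_sq_le (m : ℕ) (hm : 2 ^ 24 ≤ m) :
    harm (fun j ↦ K m j / B m) m ^ 2 ≤ 1 / (9 * (m : ℝ)) := by
  have hk : 4096 ≤ Nat.sqrt m := Nat.le_sqrt.mpr (by omega)
  have hlt : (m : ℝ) < (Nat.sqrt m + 1) ^ 2 := by exact_mod_cast Nat.lt_succ_sqrt' m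
  calc harm (fun j ↦ K m j / B m) m ^ 2 ≤ (1 / (3 * (Nat.sqrt m + 1))) ^ 2 := by
        gcongr
        · exact harm_nonneg fun j _ ↦ div_nonneg (K_nonneg m j) (B_pos m (by omega)).le
        · exact harm_uniform_le m _ hk (Nat.sqrt_le m)
    _ ≤ 1 / (9 * (m : ℝ)) := by
        rw [div_pow, one_pow, mul_pow]
        gcongr
        linarith

noncomputable def coalitionValue (a c h : ℝ) : ℝ := (a - c) ^ 2 * h ^ 2 / (1 + h) ^ 2

section coalitionValue

variable (a c : ℝ) {h h' : ℝ}

lemma coalitionValue_eq : coalitionValue a c h = (a - c) ^ 2 * (h / (1 + h)) ^ 2 := by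
  rw [coalitionValue, div_pow, mul_div_assoc]

lemma coalitionValue_mono (h0 : 0 ≤ h) (hh' : h ≤ h') :
    coalitionValue a c h ≤ coalitionValue a c h' := by
  rw [coalitionValue_eq, coalitionValue_eq]
  gcongr (a - c) ^ 2 * ?_ ^ 2
  rw [div_le_div_iff₀ (by positivity) (by linarith)]
  linarith

lemma coalitionValue_le_mul_sq (h0 : 0 ≤ h) : coalitionValue a c h ≤ (a - c) ^ 2 * h ^ 2 := by
  rw [coalitionValue_eq]
  gcongr
  exact div_le_self h0 (by linarith)

lemma coalitionValue_half : coalitionValue a c (1 / 2) = (a - c) ^ 2 / 9 := by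
  rw [coalitionValue]; ring

end coalitionValue

lemma v_eq_coalitionValue (a c : ℝ) {n s : ℕ} (hs : 1 ≤ s) (hsn : s < n) :
    v a c n s = coalitionValue a c (harm (f n s) (n - s)) := by
  have hsum : ∑ j ∈ Icc 1 (n - s), f n s j = 1 := sum_K_div_B (n - s) (by omega)
  have hF : F n s = 1 - harm (f n s) (n - s) := by
    rw [← hsum, harm, ← sum_sub_distrib, F]
    refine sum_congr rfl fun j _ ↦ ?_
    field_simp
    ring
  have hharm : ∑ j ∈ Icc 1 (n - s), f n s j / ((j : ℝ) + 1) = harm (f n s) (n - s) := by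
    simp only [harm, add_comm]
  rw [v, if_neg hsn.ne, if_neg (by omega), hF, hharm, coalitionValue]
  ring

def IsCoreAllocation (w : ℕ → ℝ) (n : ℕ) (x : Fin n → ℝ) : Prop :=
  ∑ i, x i = w n ∧ ∀ S : Finset (Fin n), S.Nonempty → w S.card ≤ ∑ i ∈ S, x i

lemma IsCoreAllocation.mono {w w' : ℕ → ℝ} {n : ℕ} {x : Fin n → ℝ}
    (hx : IsCoreAllocation w n x) (hn : w' n = w n)
    (hw : ∀ s, 1 ≤ s → s < n → w' s ≤ w s) :
    IsCoreAllocation w' n x := by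
  refine ⟨hx.1.trans hn.symm, fun S hS ↦ ?_⟩
  rcases (card_le_univ S).trans_eq (Fintype.card_fin n) |>.lt_or_eq with hlt | heq
  · exact (hw _ hS.card_pos hlt).trans (hx.2 S hS)
  · rw [heq, hn, ← hx.1, (card_eq_iff_eq_univ S).mp (by simpa using heq)]

lemma isCoreAllocation_equal_split {w : ℕ → ℝ} {n : ℕ} (hn : n ≠ 0)
    (hw : ∀ s, 1 ≤ s → s < n → w s ≤ s * (w n / n)) :
    IsCoreAllocation w n fun _ ↦ w n / n := by
  have hn' : (n : ℝ) ≠ 0 := Nat.cast_ne_zero.mpr hn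
  refine ⟨by simp [mul_div_cancel₀ _ hn'], fun S hS ↦ ?_⟩
  rw [sum_const, nsmul_eq_mul]
  rcases (card_le_univ S).trans_eq (Fintype.card_fin n) |>.lt_or_eq with hlt | heq
  · exact hw _ hS.card_pos hlt
  · rw [heq, mul_div_cancel₀ _ hn']

section dominated

variable (a c : ℝ) {q : ℕ → ℝ} {n s : ℕ}

lemma coalitionValue_le_v (hs : 1 ≤ s) (hsn : s < n) (hq0 : ∀ j ∈ Icc 1 (n - s), 0 ≤ q j)
    (hdom : ∀ M ∈ Icc 1 (n - s), ∑ j ∈ Icc 1 M, q j ≤ ∑ j ∈ Icc 1 M, f n s j) :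
    coalitionValue a c (harm q (n - s)) ≤ v a c n s := by
  rw [v_eq_coalitionValue a c hs hsn]
  exact coalitionValue_mono a c (harm_nonneg hq0) (harm_le_harm_of_sum_le hdom)

lemma coalitionValue_le_equal_share (hs : 1 ≤ s) (hn : 2 ^ 25 ≤ n)
    (hq0 : ∀ j ∈ Icc 1 (n - s), 0 ≤ q j) (hq1 : ∑ j ∈ Icc 1 (n - s), q j = 1)
    (hdom : ∀ M ∈ Icc 1 (n - s), ∑ j ∈ Icc 1 M, q j ≤ ∑ j ∈ Icc 1 M, f n s j) :
    coalitionValue a c (harm q (n - s)) ≤ s * ((a - c) ^ 2 / 4 / n) := by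
  rw [div_div, mul_div_assoc', le_div_iff₀ (by positivity)]
  have hs' : (1 : ℝ) ≤ s := by exact_mod_cast hs
  rcases le_or_gt (4 * n) (9 * s) with hlarge | hsmall
  · have hhalf : harm q (n - s) ≤ 1 / 2 := by simpa [hq1] using harm_le_half_sum hq0
    have hn9 : (4 * n : ℝ) ≤ 9 * s := by exact_mod_cast hlarge
    have := coalitionValue_mono a c (harm_nonneg hq0) hhalf
    rw [coalitionValue_half] at this
    nlinarith [sq_nonneg (a - c)]
  · have hm : (4 * n : ℝ) ≤ 9 * (n - s : ℕ) := by
      exact_mod_cast (by omega : 4 * n ≤ 9 * (n - s))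
    have hqf := harm_le_harm_of_sum_le hdom
    have := (coalitionValue_mono a c (harm_nonneg hq0) hqf).trans
      (coalitionValue_le_mul_sq a c ((harm_nonneg hq0).trans hqf))
    have hf := (le_div_iff₀ (by norm_cast; omega)).mp (harm_uniform_sq_le (n - s) (by omega))
    calc coalitionValue a c (harm q (n - s)) * (4 * n)
        ≤ (a - c) ^ 2 * harm (f n s) (n - s) ^ 2 * (9 * (n - s : ℕ)) := by gcongr
      _ ≤ (a - c) ^ 2 * 1 := by rw [mul_assoc]; gcongr; exact hf
      _ ≤ s * (a - c) ^ 2 := by nlinarith [sq_nonneg (a - c)]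

end dominated

theorem stmt11_general (a c : ℝ)
    (z : ℕ → ℕ → ℕ → ℝ)
    (hz0 : ∀ n s : ℕ, 1 ≤ s → s < n → ∀ j ∈ Finset.Icc 1 (n - s), 0 ≤ z n s j)
    (hz1 : ∀ n s : ℕ, 1 ≤ s → s < n → ∑ j ∈ Finset.Icc 1 (n - s), z n s j = 1)
    (hdom : ∀ n s : ℕ, 1 ≤ s → s < n → ∀ m ∈ Finset.Icc 1 (n - s),
      ∑ j ∈ Finset.Icc 1 m, z n s j ≤ ∑ j ∈ Finset.Icc 1 m, f n s j)
    (vz : ℕ → ℕ → ℝ)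
    (hvz : ∀ n s : ℕ, 1 ≤ s → s < n → vz n s =
      (a - c) ^ 2 * (∑ j ∈ Finset.Icc 1 (n - s), z n s j / (1 + (j : ℝ))) ^ 2 /
        (1 + ∑ j ∈ Finset.Icc 1 (n - s), z n s j / (1 + (j : ℝ))) ^ 2)
    (hvzn : ∀ n : ℕ, vz n n = (a - c) ^ 2 / 4) :
    (∀ n : ℕ, ∀ x : Fin n → ℝ,
      ((∑ i, x i = v a c n n) ∧
        ∀ S : Finset (Fin n), S.Nonempty → v a c n S.card ≤ ∑ i ∈ S, x i) →
      ((∑ i, x i = vz n n) ∧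
        ∀ S : Finset (Fin n), S.Nonempty → vz n S.card ≤ ∑ i ∈ S, x i)) ∧
    (∃ N₀ : ℕ, ∀ n : ℕ, N₀ ≤ n → ∃ x : Fin n → ℝ,
      (∑ i, x i = vz n n) ∧
        ∀ S : Finset (Fin n), S.Nonempty → vz n S.card ≤ ∑ i ∈ S, x i) := by
  have hvz_eq n s (hs : 1 ≤ s) (hsn : s < n) :
      vz n s = coalitionValue a c (harm (z n s) (n - s)) :=
    hvz n s hs hsn
  refine ⟨fun n x hx ↦ IsCoreAllocation.mono (w := v a c n) (w' := vz n) hx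
    (by rw [hvzn, v_self]) fun s hs hsn ↦ ?_, 2 ^ 25, fun n hn ↦
    ⟨_, isCoreAllocation_equal_split (w := vz n) (by positivity) fun s hs hsn ↦ ?_⟩⟩
  · rw [hvz_eq n s hs hsn]
    exact coalitionValue_le_v a c hs hsn (hz0 n s hs hsn) (hdom n s hs hsn)
  · rw [hvz_eq n s hs hsn, hvzn]
    exact coalitionValue_le_equal_share a c hs hn (hz0 n s hs hsn) (hz1 n s hs hsn)
      (hdom n s hs hsn)

/-- if for each `n > s ≥ 1` the distribution `z n s` on `{1,…,n-s}`
first-order dominates the uniform partition distribution `f n s`, and `v_z` is the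
game built from `z` via the harmonic representation, then (i) every core allocation
of `(Fin n, v^n)` is a core allocation of `(Fin n, v_z^n)`, and (ii) the core of
`(Fin n, v_z^n)` is nonempty for all sufficiently large `n`. -/
theorem stmt11 (a c : ℝ) (hc : 0 < c) (hca : c < a)
    (z : ℕ → ℕ → ℕ → ℝ)
    (hz0 : ∀ n s : ℕ, 1 ≤ s → s < n → ∀ j ∈ Finset.Icc 1 (n - s), 0 ≤ z n s j)
    (hz1 : ∀ n s : ℕ, 1 ≤ s → s < n → ∑ j ∈ Finset.Icc 1 (n - s), z n s j = 1)
    (hdom : ∀ n s : ℕ, 1 ≤ s → s < n → ∀ m ∈ Finset.Icc 1 (n - s),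
      ∑ j ∈ Finset.Icc 1 m, z n s j ≤ ∑ j ∈ Finset.Icc 1 m, f n s j)
    (vz : ℕ → ℕ → ℝ)
    (hvz : ∀ n s : ℕ, 1 ≤ s → s < n → vz n s =
      (a - c) ^ 2 * (∑ j ∈ Finset.Icc 1 (n - s), z n s j / (1 + (j : ℝ))) ^ 2 /
        (1 + ∑ j ∈ Finset.Icc 1 (n - s), z n s j / (1 + (j : ℝ))) ^ 2)
    (hvzn : ∀ n : ℕ, vz n n = (a - c) ^ 2 / 4) :
    (∀ n : ℕ, ∀ x : Fin n → ℝ,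
      ((∑ i, x i = v a c n n) ∧
        ∀ S : Finset (Fin n), S.Nonempty → v a c n S.card ≤ ∑ i ∈ S, x i) →
      ((∑ i, x i = vz n n) ∧
        ∀ S : Finset (Fin n), S.Nonempty → vz n S.card ≤ ∑ i ∈ S, x i)) ∧
    (∃ N₀ : ℕ, ∀ n : ℕ, N₀ ≤ n → ∃ x : Fin n → ℝ,
      (∑ i, x i = vz n n) ∧
        ∀ S : Finset (Fin n), S.Nonempty → vz n S.card ≤ ∑ i ∈ S, x i) :=
  stmt11_general a c z hz0 hz1 hdom vz hvz hvzn
end
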